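/- Let p be a prime, k an integer, and n ≥ 1, and let r be the size of the (k mod p^n)-monomial minimal solution of (E_{p^n}). Then: (i) the size of the (k mod p^{n+1})-monomial minimal solution of (E_{p^{n+1}}) equals r or p·r; (ii) if p is odd and r is even, then M_r(k, …, k) = −Id over Z/p^nZ; (iii) if p is odd and h denotes the size of the (k mod p)-monomial minimal solution of (E_p), then r ≡ h (mod 4) or r ≡ −h (mod 4); in particular r ≡ 2 (mod 4) if and only if h ≡ 2 (mod 4). -/

import Mathlib

open Matrix

/-- The elementary matrix `[[a, -1], [1, 0]]` over `ZMod N`. -/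
def genMat {N : ℕ} (a : ZMod N) : Matrix (Fin 2) (Fin 2) (ZMod N) :=
  !![a, -1; 1, 0]

/-- `Mword [a₁, …, aₙ]` is the matrix `Mₙ(a₁, …, aₙ) = genMat aₙ * ⋯ * genMat a₁`. -/
def Mword {N : ℕ} (l : List (ZMod N)) : Matrix (Fin 2) (Fin 2) (ZMod N) :=
  (l.reverse.map genMat).prod

/-- A tuple (encoded as a list) is a solution of `(E_N)` if its matrix is `±Id`. -/
def IsSolutionE {N : ℕ} (l : List (ZMod N)) : Prop :=
  Mword l = 1 ∨ Mword l = -1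

/-- The size of the `k`-monomial minimal solution of `(E_N)`: the least positive `n`
such that the constant `n`-tuple `(k, …, k)` is a solution of `(E_N)`. -/
noncomputable def monomialSize (N : ℕ) (k : ZMod N) : ℕ :=
  sInf {n : ℕ | 0 < n ∧ IsSolutionE (List.replicate n k)}

/-- The `k`-monomial minimal solution of `(E_N)`. -/
noncomputable def monoSol (N : ℕ) (k : ZMod N) : List (ZMod N) :=
  List.replicate (monomialSize N k) k

/-- The sum `⊕` of two tuples:
`(a₁,…,aₘ) ⊕ (b₁,…,bₗ) = (a₁+bₗ, a₂, …, aₘ₋₁, aₘ+b₁, b₂, …, bₗ₋₁)`. -/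
def oplus {N : ℕ} (a b : List (ZMod N)) : List (ZMod N) :=
  (a.headD 0 + b.getLastD 0) ::
    ((a.drop 1).dropLast ++ (a.getLastD 0 + b.headD 0) :: (b.drop 1).dropLast)

/-- Two tuples are equivalent (`∼`) if one is obtained from the other by a cyclic
permutation, possibly composed with order reversal. -/
def TupEquiv {N : ℕ} (c d : List (ZMod N)) : Prop :=
  (∃ i, d = c.rotate i) ∨ (∃ i, d = c.reverse.rotate i)

/-- A tuple is reducible if it is equivalent to a sum `a ⊕ b` where `b` is a solution of
`(E_N)` and both `a`, `b` have length at least `3`. -/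
def IsReducibleE {N : ℕ} (c : List (ZMod N)) : Prop :=
  ∃ a b : List (ZMod N), 3 ≤ a.length ∧ 3 ≤ b.length ∧ IsSolutionE b ∧
    TupEquiv c (oplus a b)

/-- An irreducible solution of `(E_N)`: a solution of size at least `3` that is not
reducible (the solution `(0,0)` is not considered irreducible). -/
def IsIrreducibleE {N : ℕ} (c : List (ZMod N)) : Prop :=
  IsSolutionE c ∧ 3 ≤ c.length ∧ ¬ IsReducibleE c

/-- A reducible solution of `(E_N)`: a solution that is not irreducible. -/
def IsReducibleSol {N : ℕ} (c : List (ZMod N)) : Prop :=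
  IsSolutionE c ∧ ¬ IsIrreducibleE c

/-- `N` is monomially irreducible if for every nonzero `k ∈ ZMod N` the `k`-monomial
minimal solution of `(E_N)` is irreducible. -/
def MonomiallyIrreducible (N : ℕ) : Prop :=
  ∀ k : ZMod N, k ≠ 0 → IsIrreducibleE (monoSol N k)

/-- `N` is quasi monomially irreducible if for every integer `k` coprime to `N` the
`(k mod N)`-monomial minimal solution of `(E_N)` is irreducible. -/
def QuasiMonomiallyIrreducible (N : ℕ) : Prop :=
  ∀ k : ℤ, Int.gcd k (N : ℤ) = 1 → IsIrreducibleE (monoSol N (k : ZMod N))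

/-- `N` is semi monomially irreducible: if `N` is even but not divisible by `4`, this
requires that for every integer `a` coprime to `N/2` the `(2a mod N)`-monomial minimal
solution of `(E_N)` is irreducible; otherwise (i.e. `N` odd or divisible by `4`), it
requires the same for every integer `a` coprime to `N`. -/
def SemiMonomiallyIrreducible (N : ℕ) : Prop :=
  if 2 ∣ N ∧ ¬ (4 ∣ N) then
    ∀ a : ℤ, Int.gcd a ((N / 2 : ℕ) : ℤ) = 1 →
      IsIrreducibleE (monoSol N ((2 * a : ℤ) : ZMod N))
  else
    ∀ a : ℤ, Int.gcd a (N : ℤ) = 1 →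
      IsIrreducibleE (monoSol N ((2 * a : ℤ) : ZMod N))


/-! With `A = [[k, -1], [1, 0]]`, the size of the `k`-monomial minimal solution modulo `N` is the
order of `A` modulo `±Id`, so it divides every `m` with `A ^ m = ±Id`. Reducing modulo `p ^ n`
gives `r ∣ r'`; conversely a matrix that is `Id` modulo `p ^ n` has the form `Id + p ^ n D`, whose
`p`-th power is `Id` modulo `p ^ (n + 1)`, so `r' ∣ p r`. This is (i), and by induction
`r = p ^ j h`, which gives (iii) since `p ^ j ≡ ±1 (mod 4)`. For (ii), if `A ^ r = Id` with
`r = 2 s`, then `B = A ^ s` is an involution of determinant one, i.e. equal to its adjugate; over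
the local ring `ZMod (p ^ n)`, where `2` is a unit, this forces `B = ±Id`, against minimality. -/

section LocalRing

variable {R : Type*} [CommRing R] [IsLocalRing R]

theorem IsLocalRing.eq_one_or_neg_one_of_mul_self_eq_one (h2 : IsUnit (2 : R)) {x : R}
    (hx : x * x = 1) : x = 1 ∨ x = -1 := by
  have hprod : (x + 1) * (x - 1) = 0 := by linear_combination hx
  rcases IsLocalRing.isUnit_or_isUnit_of_isUnit_add (a := x + 1) (b := 1 - x)
    (by convert h2 using 1; ring) with hu | hu
  · left
    linear_combination hu.mul_left_cancel (hprod.trans (mul_zero _).symm)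
  · right
    have : (1 - x) * (x + 1) = (1 - x) * 0 := by linear_combination -hprod
    linear_combination hu.mul_left_cancel this

theorem Matrix.eq_one_or_neg_one_of_mul_self_eq_one (h2 : IsUnit (2 : R))
    {B : Matrix (Fin 2) (Fin 2) R} (hdet : B.det = 1) (hB : B * B = 1) : B = 1 ∨ B = -1 := by
  have hadj : B.adjugate = B := by
    calc B.adjugate = B.adjugate * B * B := by rw [mul_assoc, hB, mul_one]
      _ = B := by rw [adjugate_mul, hdet, one_smul, one_mul]
  have e00 := congrFun (congrFun hadj 0) 0
  have e01 := congrFun (congrFun hadj 0) 1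
  have e10 := congrFun (congrFun hadj 1) 0
  simp only [adjugate_fin_two, of_apply, cons_val', cons_val_zero, cons_val_one] at e00 e01 e10
  rw [det_fin_two] at hdet
  have hb : B 0 1 = 0 := h2.mul_left_cancel (by linear_combination -e01)
  have hc : B 1 0 = 0 := h2.mul_left_cancel (by linear_combination -e10)
  have ha : B 0 0 * B 0 0 = 1 := by linear_combination hdet - B 0 0 * e00 + B 0 1 * hc
  rw [B.eta_fin_two, hb, hc, e00]
  refine (IsLocalRing.eq_one_or_neg_one_of_mul_self_eq_one h2 ha).imp (fun h ↦ ?_)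
    (fun h ↦ ?_) <;>
    ext i j <;> fin_cases i <;> fin_cases j <;> simp [h]

end LocalRing

theorem ZMod.isLocalRing_prime_pow {p n : ℕ} (hp : p.Prime) (hn : n ≠ 0) :
    IsLocalRing (ZMod (p ^ n)) := by
  have : NeZero (p ^ n) := ⟨pow_ne_zero _ hp.ne_zero⟩
  have : Nontrivial (ZMod (p ^ n)) :=
    ZMod.nontrivial_iff.mpr (Nat.one_lt_pow hn hp.one_lt).ne'
  have hunit (x : ZMod (p ^ n)) : IsUnit x ↔ ¬ p ∣ x.val := by
    rw [← isUnit_natCast_iff_not_dvd_pow hp (Nat.pos_of_ne_zero hn), ZMod.natCast_zmod_val]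
  refine IsLocalRing.of_nonunits_add fun a b ha hb ↦ ?_
  simp only [mem_nonunits_iff, hunit, not_not] at ha hb ⊢
  rw [ZMod.val_add]
  exact (Nat.dvd_mod_iff (dvd_pow_self p hn)).mpr (dvd_add ha hb)

theorem one_add_pow_of_mul_self_eq_zero {R : Type*} [Semiring R] {c : R} (hc : c * c = 0)
    (d : ℕ) : (1 + c) ^ d = 1 + d • c := by
  induction d with
  | zero => simp
  | succ d ih =>
    rw [pow_succ, ih, mul_add, mul_one, add_mul, one_mul, smul_mul_assoc, hc, smul_zero,
      add_zero, succ_nsmul, add_assoc]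

section PlusMinusOne

variable {M : Type*} [Monoid M] [HasDistribNeg M] {x : M} {r : ℕ}

theorem pow_mul_eq_one_or_neg_one (hr : x ^ r = 1 ∨ x ^ r = -1) (q : ℕ) :
    x ^ (r * q) = 1 ∨ x ^ (r * q) = -1 := by
  rcases hr with h | h <;> simp [pow_mul, h, neg_one_pow_eq_or]

theorem pow_mod_eq_one_or_neg_one (hr : x ^ r = 1 ∨ x ^ r = -1) {m : ℕ}
    (hm : x ^ m = 1 ∨ x ^ m = -1) : x ^ (m % r) = 1 ∨ x ^ (m % r) = -1 := by
  have hsplit : x ^ m = x ^ (r * (m / r)) * x ^ (m % r) := by rw [← pow_add, Nat.div_add_mod]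
  rcases pow_mul_eq_one_or_neg_one hr (m / r) with hq | hq <;> rw [hq] at hsplit <;>
    rcases hm with hm | hm <;> simp_all [neg_eq_iff_eq_neg]

end PlusMinusOne

section MonomialSize

variable {N : ℕ}

theorem Mword_replicate (m : ℕ) (a : ZMod N) : Mword (List.replicate m a) = genMat a ^ m := by
  simp [Mword, List.reverse_replicate, List.map_replicate, List.prod_replicate]

theorem det_genMat (a : ZMod N) : (genMat a).det = 1 := by
  simp [genMat, det_fin_two_of]

theorem genMat_map {M : ℕ} (f : ZMod N →+* ZMod M) (a : ZMod N) :
    (genMat a).map f = genMat (f a) := by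
  ext i j
  fin_cases i <;> fin_cases j <;> simp [genMat]

variable [NeZero N]

theorem exists_genMat_pow_eq_one (a : ZMod N) : ∃ m, 0 < m ∧ genMat a ^ m = 1 := by
  obtain ⟨u, hu⟩ := (isUnit_iff_isUnit_det _).mpr (det_genMat a ▸ isUnit_one)
  exact ⟨orderOf u, orderOf_pos u, by rw [← hu, ← Units.val_pow_eq_pow_val,
    pow_orderOf_eq_one, Units.val_one]⟩

theorem monomialSize_spec (a : ZMod N) : 0 < monomialSize N a ∧
    (genMat a ^ monomialSize N a = 1 ∨ genMat a ^ monomialSize N a = -1) := by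
  obtain ⟨m, hm, hm1⟩ := exists_genMat_pow_eq_one a
  have : monomialSize N a ∈ {n | 0 < n ∧ IsSolutionE (List.replicate n a)} :=
    Nat.sInf_mem ⟨m, hm, .inl (by rw [Mword_replicate, hm1])⟩
  simpa only [Set.mem_ofPred_eq, IsSolutionE, Mword_replicate] using this

theorem monomialSize_dvd_iff (a : ZMod N) {m : ℕ} :
    monomialSize N a ∣ m ↔ genMat a ^ m = 1 ∨ genMat a ^ m = -1 := by
  obtain ⟨hpos, hspec⟩ := monomialSize_spec a
  refine ⟨fun ⟨q, hq⟩ ↦ hq ▸ pow_mul_eq_one_or_neg_one hspec q, fun hm ↦ ?_⟩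
  by_contra hndvd
  have hmod : m % monomialSize N a ≠ 0 := fun h ↦ hndvd (Nat.dvd_of_mod_eq_zero h)
  have := Nat.sInf_le (s := {n | 0 < n ∧ IsSolutionE (List.replicate n a)})
    ⟨Nat.pos_of_ne_zero hmod, by
      simpa only [IsSolutionE, Mword_replicate] using pow_mod_eq_one_or_neg_one hspec hm⟩
  exact absurd this (Nat.mod_lt _ hpos).not_ge

theorem monomialSize_map_dvd {M : ℕ} [NeZero M] (f : ZMod N →+* ZMod M) (a : ZMod N) :
    monomialSize M (f a) ∣ monomialSize N a := by
  rw [monomialSize_dvd_iff, ← genMat_map, ← RingHom.mapMatrix_apply, ← map_pow]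
  rcases (monomialSize_spec a).2 with h | h <;> simp only [h, map_one, map_neg, true_or, or_true]

end MonomialSize

theorem ZMod.exists_eq_mul_of_castHom_eq_zero {q N : ℕ} [NeZero N] (h : q ∣ N) {x : ZMod N}
    (hx : ZMod.castHom h (ZMod q) x = 0) : ∃ y, x = q * y := by
  rw [← ZMod.natCast_zmod_val x, map_natCast, ZMod.natCast_eq_zero_iff] at hx
  obtain ⟨c, hc⟩ := hx
  exact ⟨c, by rw [← ZMod.natCast_zmod_val x, hc, Nat.cast_mul]⟩

theorem Matrix.pow_eq_one_of_map_castHom_eq_one {ι : Type*} [Fintype ι] [DecidableEq ι]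
    {q N d : ℕ} [NeZero N] (hqN : q ∣ N) (hsq : N ∣ q * q) (hd : N ∣ d * q)
    {X : Matrix ι ι (ZMod N)} (hX : X.map (ZMod.castHom hqN (ZMod q)) = 1) : X ^ d = 1 := by
  have h0 : (ZMod.castHom hqN (ZMod q)).mapMatrix (X - 1) = 0 := by
    rw [map_sub, map_one, RingHom.mapMatrix_apply, hX, sub_self]
  choose D hD using fun i j ↦
    ZMod.exists_eq_mul_of_castHom_eq_zero hqN (congrFun (congrFun h0 i) j)
  have hC : X - 1 = (q : ZMod N) • Matrix.of D := by ext i j; simp [hD]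
  have hqq : (q : ZMod N) * q = 0 := by
    rw [← Nat.cast_mul, ZMod.natCast_eq_zero_iff]; exact hsq
  have hdq : (d : ZMod N) * q = 0 := by
    rw [← Nat.cast_mul, ZMod.natCast_eq_zero_iff]; exact hd
  have hCC : (X - 1) * (X - 1) = 0 := by
    rw [hC, smul_mul_smul_comm, hqq, zero_smul]
  rw [← add_sub_cancel 1 X, one_add_pow_of_mul_self_eq_zero hCC, hC,
    ← Nat.cast_smul_eq_nsmul (ZMod N), smul_smul, hdq, zero_smul, add_zero]

theorem Matrix.pow_eq_one_or_neg_one_of_map_castHom {ι : Type*} [Fintype ι] [DecidableEq ι]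
    {q N d : ℕ} [NeZero N] (hqN : q ∣ N) (hsq : N ∣ q * q) (hd : N ∣ d * q)
    {X : Matrix ι ι (ZMod N)}
    (hX : X.map (ZMod.castHom hqN (ZMod q)) = 1 ∨ X.map (ZMod.castHom hqN (ZMod q)) = -1) :
    X ^ d = 1 ∨ X ^ d = -1 := by
  rcases hX with h | h
  · exact .inl (pow_eq_one_of_map_castHom_eq_one hqN hsq hd h)
  · have hneg : (-X) ^ d = 1 := pow_eq_one_of_map_castHom_eq_one hqN hsq hd <| by
      rw [← RingHom.mapMatrix_apply, map_neg, RingHom.mapMatrix_apply, h, neg_neg]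
    rw [← neg_neg X, neg_pow, hneg, mul_one]
    exact neg_one_pow_eq_or _ d

theorem monomialSize_prime_pow_succ_eq_or_eq_mul {p n : ℕ} (hp : p.Prime) (hn : n ≠ 0)
    (a : ZMod (p ^ (n + 1))) :
    monomialSize (p ^ (n + 1)) a =
        monomialSize (p ^ n) (ZMod.castHom (pow_dvd_pow p n.le_succ) _ a) ∨
      monomialSize (p ^ (n + 1)) a =
        p * monomialSize (p ^ n) (ZMod.castHom (pow_dvd_pow p n.le_succ) _ a) := by
  have : NeZero p := ⟨hp.ne_zero⟩
  set f := ZMod.castHom (pow_dvd_pow p n.le_succ) (ZMod (p ^ n))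
  obtain ⟨e, he⟩ := monomialSize_map_dvd f a
  have hdvd : monomialSize (p ^ (n + 1)) a ∣ monomialSize (p ^ n) (f a) * p := by
    rw [monomialSize_dvd_iff, pow_mul]
    refine Matrix.pow_eq_one_or_neg_one_of_map_castHom (pow_dvd_pow p n.le_succ)
      (by rw [← pow_add]; exact pow_dvd_pow p (by omega)) (pow_succ' p n).dvd ?_
    rw [← RingHom.mapMatrix_apply, map_pow, RingHom.mapMatrix_apply, genMat_map]
    exact (monomialSize_spec (f a)).2
  rw [he, Nat.mul_dvd_mul_iff_left (monomialSize_spec (f a)).1] at hdvd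
  rcases (Nat.dvd_prime hp).mp hdvd with rfl | rfl
  · exact .inl (by rw [he, mul_one])
  · exact .inr (by rw [he, mul_comm])

theorem monomialSize_prime_pow_succ_intCast_eq_or_eq_mul {p n : ℕ} (hp : p.Prime) (hn : n ≠ 0)
    (k : ℤ) :
    monomialSize (p ^ (n + 1)) (k : ZMod (p ^ (n + 1))) =
        monomialSize (p ^ n) (k : ZMod (p ^ n)) ∨
      monomialSize (p ^ (n + 1)) (k : ZMod (p ^ (n + 1))) =
        p * monomialSize (p ^ n) (k : ZMod (p ^ n)) := by
  simpa only [map_intCast] using monomialSize_prime_pow_succ_eq_or_eq_mul hp hn (k : ZMod _)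

theorem exists_monomialSize_prime_pow_eq_pow_mul {p n : ℕ} (hp : p.Prime) (hn : n ≠ 0)
    (k : ℤ) :
    ∃ j, monomialSize (p ^ n) (k : ZMod (p ^ n)) = p ^ j * monomialSize p (k : ZMod p) := by
  induction n with
  | zero => exact absurd rfl hn
  | succ n ih =>
    rcases eq_or_ne n 0 with rfl | hn0
    · refine ⟨0, ?_⟩
      rw [pow_zero, one_mul]
      exact congrArg (fun N ↦ monomialSize N (k : ZMod N)) (pow_one p)
    obtain ⟨j, hj⟩ := ih hn0
    rcases monomialSize_prime_pow_succ_intCast_eq_or_eq_mul hp hn0 k with h | h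
    · exact ⟨j, by rw [h, hj]⟩
    · exact ⟨j + 1, by rw [h, hj, pow_succ', mul_assoc]⟩

theorem genMat_pow_monomialSize_eq_neg_one {N : ℕ} [NeZero N] [IsLocalRing (ZMod N)]
    (h2 : IsUnit (2 : ZMod N)) (a : ZMod N) (he : Even (monomialSize N a)) :
    genMat a ^ monomialSize N a = -1 := by
  obtain ⟨hpos, hspec⟩ := monomialSize_spec a
  refine hspec.resolve_left fun h1 ↦ ?_
  obtain ⟨s, hs⟩ := he
  have hB : genMat a ^ s = 1 ∨ genMat a ^ s = -1 :=
    Matrix.eq_one_or_neg_one_of_mul_self_eq_one h2 (by rw [det_pow, det_genMat, one_pow])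
      (by rw [← pow_add, ← hs, h1])
  have := Nat.le_of_dvd (by omega) ((monomialSize_dvd_iff a).mpr hB)
  omega

theorem Int.odd_mul_modEq_four {u : ℤ} (hu : Odd u) (h : ℤ) :
    u * h ≡ h [ZMOD 4] ∨ u * h ≡ -h [ZMOD 4] := by
  have hu4 : u ≡ 1 [ZMOD 4] ∨ u ≡ -1 [ZMOD 4] := by
    obtain ⟨t, rfl⟩ := hu
    simp only [Int.ModEq]
    omega
  exact hu4.imp (fun h1 ↦ by simpa using h1.mul_right h)
    (fun h1 ↦ by simpa using h1.mul_right h)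

/-- for `p` prime, `k ∈ ℤ`, `n ≥ 1` and `r` the size of the
`(k mod p^n)`-monomial minimal solution of `(E_{p^n})`:
(i) the size of the `(k mod p^(n+1))`-monomial minimal solution of `(E_{p^(n+1)})` is
`r` or `p·r`; (ii) if `p` is odd and `r` is even then `M_r(k, …, k) = -Id` over
`ZMod (p^n)`; (iii) if `p` is odd and `h` is the size of the `(k mod p)`-monomial
minimal solution of `(E_p)`, then `r ≡ ±h (mod 4)`, and `r ≡ 2 (mod 4)` iff
`h ≡ 2 (mod 4)`. -/
theorem stmt_18 (p : ℕ) (hp : p.Prime) (k : ℤ) (n : ℕ) (hn : 1 ≤ n)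
    (r : ℕ) (hr : r = monomialSize (p ^ n) (k : ZMod (p ^ n))) :
    (monomialSize (p ^ (n + 1)) (k : ZMod (p ^ (n + 1))) = r ∨
      monomialSize (p ^ (n + 1)) (k : ZMod (p ^ (n + 1))) = p * r) ∧
    (Odd p → Even r → Mword (List.replicate r (k : ZMod (p ^ n))) = -1) ∧
    (Odd p → ∀ h : ℕ, h = monomialSize p (k : ZMod p) →
      (((r : ℤ) ≡ (h : ℤ) [ZMOD 4]) ∨ ((r : ℤ) ≡ -(h : ℤ) [ZMOD 4])) ∧
      (r % 4 = 2 ↔ h % 4 = 2)) := by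
  have hn0 : n ≠ 0 := by omega
  have : NeZero p := ⟨hp.ne_zero⟩
  subst hr
  refine ⟨monomialSize_prime_pow_succ_intCast_eq_or_eq_mul hp hn0 k, fun hodd he ↦ ?_,
    fun hodd h hh ↦ ?_⟩
  · have := ZMod.isLocalRing_prime_pow hp hn0
    have h2 : IsUnit (2 : ZMod (p ^ n)) := by
      exact_mod_cast (ZMod.isUnit_iff_coprime 2 (p ^ n)).mpr
        ((Nat.coprime_two_left.mpr hodd).pow_right n)
    rw [Mword_replicate]
    exact genMat_pow_monomialSize_eq_neg_one h2 _ he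
  · obtain ⟨j, hj⟩ := exists_monomialSize_prime_pow_eq_pow_mul hp hn0 k
    have hmod :
        ((p ^ j * h : ℕ) : ℤ) ≡ h [ZMOD 4] ∨ ((p ^ j * h : ℕ) : ℤ) ≡ -h [ZMOD 4] := by
      push_cast
      exact Int.odd_mul_modEq_four (by exact_mod_cast hodd.pow) h
    rw [hj, ← hh]
    refine ⟨hmod, ?_⟩
    rcases hmod with hm | hm <;> simp only [Int.ModEq] at hm <;> omega
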